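/- Let ρ : (Z_r)^n → D(C^{2^m}) map strings to 2^m-dimensional density matrices, and assume the matrix hypercontractive inequality ∑_S ((p-1)/(r-1))^{|S|} ‖ρ̂(S)‖_p^2 ≤ (r^{-n} ∑_x ‖ρ(x)‖_p^p)^{2/p} holds for p ∈ [1,2]. Then for every δ ∈ [0, 1/(r-1)], ∑_{S ∈ Z_r^n} δ^{|S|} ‖ρ̂(S)‖_1^2 ≤ 2^{2(r-1)δ m}. -/

import Mathlib

open Matrix ComplexOrder

/-- The Schatten `p`-norm of a complex `d × d` matrix. -/
noncomputable def schattenNorm {d : ℕ} (p : ℝ) (A : Matrix (Fin d) (Fin d) ℂ) : ℝ :=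
  (∑ i, ((Matrix.isHermitian_conjTranspose_mul_self A).eigenvalues i) ^ (p / 2)) ^ (1 / p)

/-- Fourier coefficient of a matrix-valued function on `(ℤ_r)^n`. -/
noncomputable def matFourier {r d n : ℕ} [NeZero r]
    (f : (Fin n → ZMod r) → Matrix (Fin d) (Fin d) ℂ) (S : Fin n → ZMod r) :
    Matrix (Fin d) (Fin d) ℂ :=
  (((r : ℂ) ^ n)⁻¹) •
    ∑ x : Fin n → ZMod r,
      (Complex.exp (2 * Real.pi * Complex.I / r) ^ (∑ i, (S i).val * (x i).val))⁻¹ • f x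

/-- Hamming weight of `S ∈ (ℤ_r)^n`. -/
def hammingWt {r n : ℕ} [NeZero r] (S : Fin n → ZMod r) : ℕ :=
  (Finset.univ.filter fun i => S i ≠ 0).card

/-! Take `p = 1 + (r - 1) δ ∈ [1, 2]`, so that the hypercontractive weight `(p - 1) / (r - 1)`
is exactly `δ`. The eigenvalues of a density matrix are nonnegative and sum to `1`, hence
`‖σ‖_p^p ≤ 1` and the right-hand side of the hypercontractive inequality is at most `1`.
Hölder's inequality gives `‖A‖_1 ≤ d^{1 - 1/p} ‖A‖_p ≤ d^{p - 1} ‖A‖_p` for `d = 2^m`, which turns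
this `p`-norm bound into the trace-norm bound at the cost of the factor
`2^{2 (p - 1) m} = 2^{2 (r - 1) δ m}`. -/

namespace Matrix.IsHermitian

variable {𝕜 n : Type*} [RCLike 𝕜] [Fintype n] [DecidableEq n] {A B : Matrix n n 𝕜}

open Polynomial in
lemma eigenvalues_map_eq_of_eq_cfc (hA : A.IsHermitian) (hB : B.IsHermitian) {f : ℝ → ℝ}
    (hBA : B = cfc f A) :
    Finset.univ.val.map hB.eigenvalues = Finset.univ.val.map (f ∘ hA.eigenvalues) := by
  have hroots := hB.roots_charpoly_eq_eigenvalues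
  rw [show B.charpoly = _ from hBA ▸ hA.charpoly_cfc_eq f,
    roots_prod _ _ (by simp [Finset.prod_ne_zero_iff, X_sub_C_ne_zero])] at hroots
  simpa [Multiset.map_map, Function.comp_def] using (congrArg (Multiset.map RCLike.re) hroots).symm

lemma sum_eigenvalues_eq_of_eq_cfc (hA : A.IsHermitian) (hB : B.IsHermitian) {f : ℝ → ℝ}
    (hBA : B = cfc f A) (g : ℝ → ℝ) :
    ∑ i, g (hB.eigenvalues i) = ∑ i, g (f (hA.eigenvalues i)) := by
  have h := congrArg (fun s => (s.map g).sum) (eigenvalues_map_eq_of_eq_cfc hA hB hBA)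
  simp only [Multiset.map_map] at h
  exact h

end Matrix.IsHermitian

section Schatten

variable {d : ℕ}

lemma schattenNorm_nonneg (p : ℝ) (A : Matrix (Fin d) (Fin d) ℂ) : 0 ≤ schattenNorm p A :=
  Real.rpow_nonneg (Finset.sum_nonneg fun i _ =>
    Real.rpow_nonneg ((posSemidef_conjTranspose_mul_self A).eigenvalues_nonneg i) _) _

-- For `σ ⪰ 0` we have `σᴴ σ = σ²`, so the eigenvalues of `σᴴ σ` are the squares of those of `σ`.
lemma Matrix.PosSemidef.schattenNorm_rpow {σ : Matrix (Fin d) (Fin d) ℂ} (hσ : σ.PosSemidef)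
    {p : ℝ} (hp : p ≠ 0) : schattenNorm p σ ^ p = ∑ i, hσ.1.eigenvalues i ^ p := by
  have hsq : σᴴ * σ = cfc (· ^ 2 : ℝ → ℝ) σ := by
    rw [cfc_pow_id σ 2 hσ.1.isSelfAdjoint, hσ.1.eq, sq]
  rw [schattenNorm, ← Real.rpow_mul (Finset.sum_nonneg fun i _ =>
      Real.rpow_nonneg ((posSemidef_conjTranspose_mul_self σ).eigenvalues_nonneg i) _),
    one_div_mul_cancel hp, Real.rpow_one,
    hσ.1.sum_eigenvalues_eq_of_eq_cfc (isHermitian_conjTranspose_mul_self σ) hsq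
      (· ^ (p / 2))]
  refine Finset.sum_congr rfl fun i _ => ?_
  rw [← Real.rpow_natCast, ← Real.rpow_mul (hσ.eigenvalues_nonneg i)]
  norm_num [mul_div_cancel₀]

lemma Matrix.PosSemidef.schattenNorm_rpow_le_one {σ : Matrix (Fin d) (Fin d) ℂ}
    (hσ : σ.PosSemidef) (htr : σ.trace = 1) {p : ℝ} (hp : 1 ≤ p) : schattenNorm p σ ^ p ≤ 1 := by
  have hsum : ∑ i, hσ.1.eigenvalues i = 1 := by
    simpa [htr] using congrArg Complex.re hσ.1.trace_eq_sum_eigenvalues.symm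
  have hle : ∀ i, hσ.1.eigenvalues i ≤ 1 := fun i =>
    hsum ▸ Finset.single_le_sum (fun j _ => hσ.eigenvalues_nonneg j) (Finset.mem_univ i)
  calc schattenNorm p σ ^ p = ∑ i, hσ.1.eigenvalues i ^ p := hσ.schattenNorm_rpow (by positivity)
    _ ≤ ∑ i, hσ.1.eigenvalues i := Finset.sum_le_sum fun i _ =>
      Real.rpow_le_self_of_le_one (hσ.eigenvalues_nonneg i) (hle i) hp
    _ = 1 := hsum

lemma schattenNorm_one_le_rpow_mul_schattenNorm (A : Matrix (Fin d) (Fin d) ℂ) {p : ℝ}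
    (hp : 1 ≤ p) : schattenNorm 1 A ≤ (d : ℝ) ^ (1 - p⁻¹) * schattenNorm p A := by
  set μ := (isHermitian_conjTranspose_mul_self A).eigenvalues
  have hμ : ∀ i, 0 ≤ μ i := (posSemidef_conjTranspose_mul_self A).eigenvalues_nonneg
  have h := Real.inner_le_weight_mul_Lp_of_nonneg Finset.univ hp (fun _ => 1)
      (fun i => μ i ^ ((1 : ℝ) / 2)) (fun _ => zero_le_one) (fun i => Real.rpow_nonneg (hμ i) _)
  have hpow : ∀ i, (μ i ^ ((1 : ℝ) / 2)) ^ p = μ i ^ (p / 2) := fun i => by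
    rw [← Real.rpow_mul (hμ i), one_div_mul_eq_div]
  simp only [one_mul, Finset.sum_const, Finset.card_univ, Fintype.card_fin, nsmul_eq_mul,
    mul_one, hpow] at h
  simpa [schattenNorm] using h

lemma schattenNorm_one_le_rpow_sub_one_mul_schattenNorm [NeZero d]
    (A : Matrix (Fin d) (Fin d) ℂ) {p : ℝ} (hp : 1 ≤ p) :
    schattenNorm 1 A ≤ (d : ℝ) ^ (p - 1) * schattenNorm p A := by
  have hexp : 1 - p⁻¹ ≤ p - 1 := by
    nlinarith [inv_mul_cancel₀ (by positivity : p ≠ 0), inv_pos.mpr (by positivity : 0 < p)]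
  have hd : (1 : ℝ) ≤ d := by exact_mod_cast Nat.one_le_iff_ne_zero.mpr (NeZero.ne d)
  exact (schattenNorm_one_le_rpow_mul_schattenNorm A hp).trans
    (mul_le_mul_of_nonneg_right (Real.rpow_le_rpow_of_exponent_le hd hexp)
      (schattenNorm_nonneg p A))

lemma inv_card_mul_sum_schattenNorm_rpow_le_one {ι : Type*} [Fintype ι]
    {ρ : ι → Matrix (Fin d) (Fin d) ℂ} (hρ : ∀ x, (ρ x).PosSemidef ∧ (ρ x).trace = 1)
    {p : ℝ} (hp : 1 ≤ p) : (Fintype.card ι : ℝ)⁻¹ * ∑ x, schattenNorm p (ρ x) ^ p ≤ 1 := by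
  refine inv_mul_le_one_of_le₀ ?_ (Nat.cast_nonneg _)
  calc ∑ x, schattenNorm p (ρ x) ^ p ≤ ∑ _x : ι, (1 : ℝ) :=
        Finset.sum_le_sum fun x _ => (hρ x).1.schattenNorm_rpow_le_one (hρ x).2 hp
    _ = Fintype.card ι := by simp

end Schatten

/-- If `ρ` maps `(ℤ_r)^n` to `2^m`-dimensional density matrices and the matrix
hypercontractive inequality holds, then for every `δ ∈ [0, 1/(r-1)]`,
`∑_S δ^{|S|} ‖ρ̂(S)‖_1² ≤ 2^{2(r-1)δm}`. -/
theorem density_fourier_bound (r n m : ℕ) [NeZero r] (hr : 2 ≤ r)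
    (ρ : (Fin n → ZMod r) → Matrix (Fin (2 ^ m)) (Fin (2 ^ m)) ℂ)
    (hρ : ∀ x, (ρ x).PosSemidef ∧ (ρ x).trace = 1)
    (hyper : ∀ p : ℝ, 1 ≤ p → p ≤ 2 →
      ∑ S : Fin n → ZMod r,
          ((p - 1) / ((r : ℝ) - 1)) ^ hammingWt S * schattenNorm p (matFourier ρ S) ^ 2
        ≤ ((((r : ℝ) ^ n)⁻¹) * ∑ x : Fin n → ZMod r, schattenNorm p (ρ x) ^ p) ^ (2 / p)) :
    ∀ δ : ℝ, 0 ≤ δ → δ ≤ 1 / ((r : ℝ) - 1) →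
      ∑ S : Fin n → ZMod r, δ ^ hammingWt S * schattenNorm 1 (matFourier ρ S) ^ 2
        ≤ (2 : ℝ) ^ (2 * ((r : ℝ) - 1) * δ * m) := by
  intro δ hδ0 hδ1
  have hr1 : (0 : ℝ) < r - 1 := sub_pos.mpr (Nat.one_lt_cast.mpr hr)
  set p : ℝ := 1 + ((r : ℝ) - 1) * δ with hp
  have hp1 : 1 ≤ p := by nlinarith
  have hp2 : p ≤ 2 := by nlinarith [(le_div_iff₀ hr1).mp hδ1]
  have hweight : (p - 1) / ((r : ℝ) - 1) = δ := by
    rw [hp, add_sub_cancel_left, mul_div_cancel_left₀ _ hr1.ne']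
  have hfourier_p : ∑ S, δ ^ hammingWt S * schattenNorm p (matFourier ρ S) ^ 2 ≤ 1 := by
    refine (hweight ▸ hyper p hp1 hp2).trans (Real.rpow_le_one ?_ ?_ (by positivity))
    · exact mul_nonneg (by positivity)
        (Finset.sum_nonneg fun x _ => Real.rpow_nonneg (schattenNorm_nonneg p _) p)
    · simpa using inv_card_mul_sum_schattenNorm_rpow_le_one hρ hp1
  set C : ℝ := (2 : ℝ) ^ (((r : ℝ) - 1) * δ * m) with hC
  have hnorm (S : Fin n → ZMod r) :
      schattenNorm 1 (matFourier ρ S) ≤ C * schattenNorm p (matFourier ρ S) := by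
    convert schattenNorm_one_le_rpow_sub_one_mul_schattenNorm (matFourier ρ S) hp1 using 2
    rw [Nat.cast_pow, Nat.cast_ofNat, ← Real.rpow_natCast_mul zero_le_two, hp, hC]
    ring_nf
  calc ∑ S, δ ^ hammingWt S * schattenNorm 1 (matFourier ρ S) ^ 2
      ≤ ∑ S, δ ^ hammingWt S * (C * schattenNorm p (matFourier ρ S)) ^ 2 := by
        gcongr with S
        exacts [schattenNorm_nonneg 1 _, hnorm S]
    _ = C ^ 2 * ∑ S, δ ^ hammingWt S * schattenNorm p (matFourier ρ S) ^ 2 := by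
        rw [Finset.mul_sum]
        exact Finset.sum_congr rfl fun S _ => by ring
    _ ≤ C ^ 2 := mul_le_of_le_one_right (sq_nonneg C) hfourier_p
    _ = (2 : ℝ) ^ (2 * ((r : ℝ) - 1) * δ * m) := by
        rw [← Real.rpow_natCast, ← Real.rpow_mul zero_le_two]
        ring_nf
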